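/- arXiv:1501.00573 — 7 statements merged into one kernel-verified Lean document; each statement's English description precedes it below -/
import Mathlib

section
/- Let k, m, n be nonnegative integers with 0 ≤ k ≤ n ≤ m ≤ 2n. Then binom(2k,k)*binom(2m-2k,m-k) divides binom(2n,n)*binom(n,k)*binom(m,k)*binom(k,m-n). -/
open Nat Finset

lemma mod_two_cases (q x y : ℕ) (hx : x < q) (hy : y < q) :
    (x + y) % q = x + y ∨ (x + y) % q + q = x + y := by
  rcases lt_or_ge (x + y) q with h | h
  · left; exact Nat.mod_eq_of_lt h
  · right
    rw [Nat.mod_eq_sub_mod h, Nat.mod_eq_of_lt (by omega)]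
    omega

lemma ptwise (q a b c d e1 e2 : ℕ) (_hq : 0 < q) (_ha : a < q) (_hb : b < q)
    (_hc : c < q) (_hd : d < q)
    (h1 : e1 = a + b ∨ e1 + q = a + b) (h2 : e2 = b + c ∨ e2 + q = b + c)
    (h3 : c + d = a ∨ c + d = a + q) :
    ((if q ≤ a + a then 1 else 0) + (if q ≤ e2 + e2 then 1 else 0) : ℕ) ≤
      (if q ≤ e1 + e1 then 1 else 0) + (if q ≤ a + b then 1 else 0) +
        (if q ≤ a + e2 then 1 else 0) + (if q ≤ c + d then 1 else 0) := by
  split_ifs <;> omega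

theorem stmt_3 (k n m : ℕ) (hk : k ≤ n) (hn : n ≤ m) (hm : m ≤ 2 * n) :
    Nat.choose (2 * k) k * Nat.choose (2 * m - 2 * k) (m - k) ∣
      Nat.choose (2 * n) n * Nat.choose n k * Nat.choose m k * Nat.choose k (m - n) := by
  by_cases hmn : m - n ≤ k
  swap
  · rw [Nat.choose_eq_zero_of_lt (show k < m - n by omega), mul_zero]
    exact dvd_zero _
  have h1 : 0 < Nat.choose (2 * k) k := Nat.choose_pos (by omega)
  have h2 : 0 < Nat.choose (2 * m - 2 * k) (m - k) := Nat.choose_pos (by omega)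
  have h3 : 0 < Nat.choose (2 * n) n := Nat.choose_pos (by omega)
  have h4 : 0 < Nat.choose n k := Nat.choose_pos hk
  have h5 : 0 < Nat.choose m k := Nat.choose_pos (by omega)
  have h6 : 0 < Nat.choose k (m - n) := Nat.choose_pos hmn
  rw [← Nat.factorization_le_iff_dvd (by positivity) (by positivity)]
  rw [Finsupp.le_def]
  intro p
  by_cases hp : p.Prime
  swap
  · simp [Nat.factorization_eq_zero_of_not_prime _ hp]
  haveI : Fact p.Prime := ⟨hp⟩
  rw [Nat.factorization_mul h1.ne' h2.ne',
    Nat.factorization_mul (by positivity : Nat.choose (2*n) n * Nat.choose n k * Nat.choose m k ≠ 0) h6.ne',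
    Nat.factorization_mul (by positivity : Nat.choose (2*n) n * Nat.choose n k ≠ 0) h5.ne',
    Nat.factorization_mul h3.ne' h4.ne']
  simp only [Finsupp.coe_add, Pi.add_apply]
  rw [Nat.factorization_def _ hp, Nat.factorization_def _ hp, Nat.factorization_def _ hp,
    Nat.factorization_def _ hp, Nat.factorization_def _ hp, Nat.factorization_def _ hp]
  have hb : ∀ N : ℕ, N ≤ 2 * m → Nat.log p N < 2 * m + 1 := fun N hN =>
    lt_of_le_of_lt (le_trans (Nat.log_le_self p N) hN) (by omega)
  rw [padicValNat_choose (by omega : k ≤ 2 * k) (hb _ (by omega)),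
    padicValNat_choose (by omega : m - k ≤ 2 * m - 2 * k) (hb _ (by omega)),
    padicValNat_choose (by omega : n ≤ 2 * n) (hb _ (by omega)),
    padicValNat_choose hk (hb _ (by omega)),
    padicValNat_choose (by omega : k ≤ m) (hb _ (by omega)),
    padicValNat_choose hmn (hb _ (by omega))]
  have e1 : 2 * k - k = k := by omega
  have e2 : 2 * m - 2 * k - (m - k) = m - k := by omega
  have e3 : 2 * n - n = n := by omega
  rw [e1, e2, e3]
  simp only [Finset.card_filter]
  rw [← Finset.sum_add_distrib, ← Finset.sum_add_distrib, ← Finset.sum_add_distrib,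
    ← Finset.sum_add_distrib]
  apply Finset.sum_le_sum
  intro i hi
  have hq : 0 < p ^ i := pow_pos hp.pos i
  set q := p ^ i with hqdef
  have ha : k % q < q := Nat.mod_lt _ hq
  have hbb : (n - k) % q < q := Nat.mod_lt _ hq
  have hc : (m - n) % q < q := Nat.mod_lt _ hq
  have hd : (k - (m - n)) % q < q := Nat.mod_lt _ hq
  have hnq : n % q = (k % q + (n - k) % q) % q := by
    conv_lhs => rw [show n = k + (n - k) by omega]
    rw [Nat.add_mod]
  have hmkq : (m - k) % q = ((n - k) % q + (m - n) % q) % q := by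
    conv_lhs => rw [show m - k = (n - k) + (m - n) by omega]
    rw [Nat.add_mod]
  have hkq : k % q = ((m - n) % q + (k - (m - n)) % q) % q := by
    conv_lhs => rw [show k = (m - n) + (k - (m - n)) by omega]
    rw [Nat.add_mod]
  have hh1 : n % q = k % q + (n - k) % q ∨ n % q + q = k % q + (n - k) % q := by
    rw [hnq]; exact mod_two_cases q _ _ ha hbb
  have hh2 : (m - k) % q = (n - k) % q + (m - n) % q ∨
      (m - k) % q + q = (n - k) % q + (m - n) % q := by
    rw [hmkq]; exact mod_two_cases q _ _ hbb hc
  have hh3 : (m - n) % q + (k - (m - n)) % q = k % q ∨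
      (m - n) % q + (k - (m - n)) % q = k % q + q := by
    rcases mod_two_cases q ((m - n) % q) ((k - (m - n)) % q) hc hd with h | h
    · left; rw [← h, ← hkq]
    · right; rw [show k % q + q = ((m-n)%q + (k-(m-n))%q) % q + q by rw [← hkq]]
      omega
  exact ptwise q (k % q) ((n - k) % q) ((m - n) % q) ((k - (m - n)) % q)
    (n % q) ((m - k) % q) hq ha hbb hc hd hh1 hh2 hh3
end

section
/- For any positive integer d and nonnegative integers k, m, n with 0 ≤ k ≤ n ≤ m ≤ 2n, we have floor(2n/d) + floor(m/d) + floor((m-k)/d) + floor(k/d) ≥ floor((n-k)/d) + floor((k-m+n)/d) + floor((2m-2k)/d) + floor(2k/d) + floor(n/d) + floor((m-n)/d). -/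
/-!
The numerators on each side add up to `2n + 2m`, so the difference of the two sides does not
change when `n`, `m`, `k` are shifted by multiples of `d`, and it suffices to treat residues
`0 ≤ n, m, k < d`. There every quotient is a carry between `-2` and `1`, determined by linear
inequalities between the residues and `d`, and the inequality becomes a finite case analysis.
-/

theorem Int.ediv_cases_of_mem_Ico {d v : ℤ} (hd : 0 < d) (hv : v ∈ Set.Ico (-2 * d) (2 * d)) :
    v / d = -2 ∧ v < -d ∨ v / d = -1 ∧ -d ≤ v ∧ v < 0 ∨ v / d = 0 ∧ 0 ≤ v ∧ v < d ∨
      v / d = 1 ∧ d ≤ v := by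
  obtain ⟨hlo, hhi⟩ := hv
  have ediv_eq (q : ℤ) (h₁ : q * d ≤ v) (h₂ : v < q * d + d) : v / d = q :=
    (Int.ediv_eq_iff_of_pos hd).2 ⟨h₁, h₂⟩
  rcases lt_or_ge v (-d) with h₁ | h₁
  · exact .inl ⟨ediv_eq _ (by linarith) (by linarith), h₁⟩
  rcases lt_or_ge v 0 with h₂ | h₂
  · exact .inr <| .inl ⟨ediv_eq _ (by linarith) (by linarith), h₁, h₂⟩
  rcases lt_or_ge v d with h₃ | h₃
  · exact .inr <| .inr <| .inl ⟨ediv_eq _ (by linarith) (by linarith), h₂, h₃⟩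
  · exact .inr <| .inr <| .inr ⟨ediv_eq _ (by linarith) (by linarith), h₃⟩

def floorDefect (d n m k : ℤ) : ℤ :=
  2 * n / d + m / d + (m - k) / d + k / d -
    ((n - k) / d + (k - m + n) / d + (2 * m - 2 * k) / d + 2 * k / d + n / d + (m - n) / d)

theorem floorDefect_add_mul {d : ℤ} (hd : d ≠ 0) (n m k N M K : ℤ) :
    floorDefect d (n + d * N) (m + d * M) (k + d * K) = floorDefect d n m k := by
  unfold floorDefect
  rw [show 2 * (n + d * N) = 2 * n + d * (2 * N) by ring,
    show m + d * M - (k + d * K) = m - k + d * (M - K) by ring,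
    show n + d * N - (k + d * K) = n - k + d * (N - K) by ring,
    show k + d * K - (m + d * M) + (n + d * N) = k - m + n + d * (K - M + N) by ring,
    show 2 * (m + d * M) - 2 * (k + d * K) = 2 * m - 2 * k + d * (2 * M - 2 * K) by ring,
    show 2 * (k + d * K) = 2 * k + d * (2 * K) by ring,
    show m + d * M - (n + d * N) = m - n + d * (M - N) by ring]
  simp only [Int.add_mul_ediv_left _ _ hd]
  ring

theorem floorDefect_emod {d : ℤ} (hd : d ≠ 0) (n m k : ℤ) :
    floorDefect d n m k = floorDefect d (n % d) (m % d) (k % d) := by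
  conv_lhs => rw [← Int.emod_add_mul_ediv n d, ← Int.emod_add_mul_ediv m d,
    ← Int.emod_add_mul_ediv k d]
  exact floorDefect_add_mul hd _ _ _ _ _ _

theorem floorDefect_nonneg_of_mem_Ico {d x y z : ℤ} (hd : 0 < d) (hx : x ∈ Set.Ico 0 d)
    (hy : y ∈ Set.Ico 0 d) (hz : z ∈ Set.Ico 0 d) : 0 ≤ floorDefect d x y z := by
  obtain ⟨hx₀, hx₁⟩ := hx
  obtain ⟨hy₀, hy₁⟩ := hy
  obtain ⟨hz₀, hz₁⟩ := hz
  have carry (v : ℤ) (hlo : -2 * d ≤ v) (hhi : v < 2 * d) :=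
    Int.ediv_cases_of_mem_Ico hd ⟨hlo, hhi⟩
  have := carry (2 * x) (by omega) (by omega)
  have := carry y (by omega) (by omega)
  have := carry (y - z) (by omega) (by omega)
  have := carry z (by omega) (by omega)
  have := carry (x - z) (by omega) (by omega)
  have := carry (z - y + x) (by omega) (by omega)
  have := carry (2 * y - 2 * z) (by omega) (by omega)
  have := carry (2 * z) (by omega) (by omega)
  have := carry x (by omega) (by omega)
  have := carry (y - x) (by omega) (by omega)
  unfold floorDefect
  omega

theorem floorDefect_nonneg {d : ℤ} (hd : 0 < d) (n m k : ℤ) : 0 ≤ floorDefect d n m k := by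
  rw [floorDefect_emod hd.ne']
  exact floorDefect_nonneg_of_mem_Ico hd ⟨Int.emod_nonneg _ hd.ne', Int.emod_lt_of_pos _ hd⟩
    ⟨Int.emod_nonneg _ hd.ne', Int.emod_lt_of_pos _ hd⟩
    ⟨Int.emod_nonneg _ hd.ne', Int.emod_lt_of_pos _ hd⟩

theorem stmt_4_general (d k n m : ℤ) (hd : 0 < d) :
    (n - k).fdiv d + (k - m + n).fdiv d + (2 * m - 2 * k).fdiv d + (2 * k).fdiv d +
        n.fdiv d + (m - n).fdiv d ≤
      (2 * n).fdiv d + m.fdiv d + (m - k).fdiv d + k.fdiv d := by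
  have h := floorDefect_nonneg hd n m k
  unfold floorDefect at h
  simp only [Int.fdiv_eq_ediv_of_nonneg _ hd.le]
  linarith

theorem stmt_4 (d k n m : ℤ) (hd : 0 < d) (hk0 : 0 ≤ k) (hk : k ≤ n) (hn : n ≤ m)
    (hm : m ≤ 2 * n) :
    (n - k).fdiv d + (k - m + n).fdiv d + (2 * m - 2 * k).fdiv d + (2 * k).fdiv d +
        n.fdiv d + (m - n).fdiv d ≤
      (2 * n).fdiv d + m.fdiv d + (m - k).fdiv d + k.fdiv d :=
  stmt_4_general d k n m hd
end

section
/- For any positive integer d and nonnegative integers k ≤ n, floor(2n/d) + floor(k/d) ≥ floor(n/d) + floor((n-k)/d) + floor(2k/d). -/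
lemma aux_div_5 (d r s : ℕ) (hd : 0 < d) (hr : r < d) (hs : s < d) :
    (r + s) / d + 2 * r / d ≤ (2 * r + 2 * s) / d := by
  have h2r : 2 * r / d < 2 := (Nat.div_lt_iff_lt_mul hd).2 (by omega)
  have hrs : (r + s) / d < 2 := (Nat.div_lt_iff_lt_mul hd).2 (by omega)
  rcases le_or_gt d (r + s) with h | h
  · have h1 : 2 ≤ (2 * r + 2 * s) / d := (Nat.le_div_iff_mul_le hd).2 (by omega)
    omega
  · have h0 : (r + s) / d = 0 := Nat.div_eq_of_lt h
    rcases le_or_gt d (2 * r) with h2 | h2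
    · have h1 : 1 ≤ (2 * r + 2 * s) / d := (Nat.le_div_iff_mul_le hd).2 (by omega)
      omega
    · have h3 : 2 * r / d = 0 := Nat.div_eq_of_lt h2
      rw [h0, h3]
      exact Nat.zero_le _

theorem stmt_5 (d k n : ℕ) (hd : 0 < d) (hk : k ≤ n) :
    n / d + (n - k) / d + 2 * k / d ≤ 2 * n / d + k / d := by
  obtain ⟨a, rfl⟩ : ∃ a, n = k + a := ⟨n - k, by omega⟩
  have ha : k + a - k = a := by omega
  rw [ha]
  obtain ⟨q1, r, hr, rfl⟩ : ∃ q r, r < d ∧ k = d * q + r :=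
    ⟨k / d, k % d, k.mod_lt hd, by rw [Nat.div_add_mod]⟩
  obtain ⟨q2, s, hs, rfl⟩ : ∃ q r, r < d ∧ a = d * q + r :=
    ⟨a / d, a % d, a.mod_lt hd, by rw [Nat.div_add_mod]⟩
  have e1 : d * q1 + r + (d * q2 + s) = d * (q1 + q2) + (r + s) := by ring
  have e2 : 2 * (d * q1 + r + (d * q2 + s)) = d * (2 * (q1 + q2)) + (2 * r + 2 * s) := by ring
  have e3 : 2 * (d * q1 + r) = d * (2 * q1) + 2 * r := by ring
  rw [e2, e3, e1, Nat.mul_add_div hd, Nat.mul_add_div hd, Nat.mul_add_div hd,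
    Nat.mul_add_div hd, Nat.mul_add_div hd, Nat.div_eq_of_lt hr, Nat.div_eq_of_lt hs]
  have := aux_div_5 d r s hd hr hs
  omega
end

section
/- For an odd prime p, sum_{i=0}^{p-1} p*(-1)^i/(2i-1) ≡ -2p + (-1)^((p+1)/2) + (1/2)*sum_{k=1}^{(p-3)/2} (-1)^((p-1)/2 + k) * p^2/k^2 (mod p^3). -/
/-!
Write `p = 2k + 3`. The terms `i = 0, 1` contribute `-2p` and the middle term `i = k + 2`, where
`2i - 1 = p`, contributes `(-1)^k`. The remaining terms pair up as `i = k + 2 ∓ j` with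
`1 ≤ j ≤ k`, with denominators `p ∓ 2j`, and each pair sums to
`(-1)^(k+j) 2p²/(p² - 4j²) = (-1)^(k+1+j) p²/(2j²) + (-1)^(k+j) p⁴/(2j²(p - 2j)(p + 2j))`.
Since `2j`, `j`, `p - 2j` and `p + 2j` are prime to `p`, the last part is `p³` (indeed `p⁴`) times
a `p`-integral rational.
-/

open Finset

theorem Finset.sum_range_two_mul_add_one {M : Type*} [AddCommMonoid M] (g : ℕ → M) (k : ℕ) :
    ∑ x ∈ range (2 * k + 1), g x = g k + ∑ j ∈ Icc 1 k, (g (k - j) + g (k + j)) := by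
  induction k generalizing g with
  | zero => simp
  | succ k ih =>
    rw [show 2 * (k + 1) + 1 = 2 * k + 1 + 1 + 1 by ring, sum_range_succ, sum_range_succ',
      ih, sum_Icc_succ_top (by omega)]
    have hshift : ∀ j ∈ Icc 1 k,
        g (k - j + 1) + g (k + j + 1) = g (k + 1 - j) + g (k + 1 + j) := by
      intro j hj
      rw [mem_Icc] at hj
      rw [show k - j + 1 = k + 1 - j by omega, show k + j + 1 = k + 1 + j by omega]
    rw [sum_congr rfl hshift, Nat.sub_self, show k + 1 + (k + 1) = 2 * k + 1 + 1 by ring]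
    abel

theorem neg_one_pow_eq_of_mod_two_eq {R : Type*} [Ring R] {a b : ℕ} (h : a % 2 = b % 2) :
    (-1 : R) ^ a = (-1) ^ b := by
  rw [neg_one_pow_eq_pow_mod_two, h, ← neg_one_pow_eq_pow_mod_two]

theorem div_sub_add_div_add {K : Type*} [Field K] [CharZero K] {p j : K} (hj : j ≠ 0)
    (hsub : p - 2 * j ≠ 0) (hadd : p + 2 * j ≠ 0) :
    p / (p - 2 * j) + p / (p + 2 * j) =
      -(p ^ 2 / j ^ 2) / 2 + p ^ 3 * (p / (2 * j ^ 2 * (p - 2 * j) * (p + 2 * j))) := by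
  field_simp
  ring

section PadicIntegral

variable (p : ℕ) [Fact p.Prime]

theorem Rat.inv_natCast_mem_padicValuation_integer {d : ℕ} (hd : ¬ p ∣ d) :
    (d : ℚ)⁻¹ ∈ (Rat.padicValuation p).integer := by
  rw [Valuation.mem_integer_iff, Rat.padicValuation_le_one_iff, Rat.inv_natCast_den]
  split_ifs
  · exact (Fact.out : p.Prime).not_dvd_one
  · exact hd

theorem Rat.exists_mul_eq_of_mem_padicValuation_integer {x : ℚ}
    (hx : x ∈ (Rat.padicValuation p).integer) :
    ∃ a b : ℤ, b ≠ 0 ∧ ¬ (p : ℤ) ∣ b ∧ x * b = a := by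
  rw [Valuation.mem_integer_iff, Rat.padicValuation_le_one_iff] at hx
  exact ⟨x.num, x.den, by positivity, by exact_mod_cast hx, by simp⟩

theorem div_mem_padicValuation_integer {j : ℕ} (hj : 0 < j) (hjp : 2 * j < p) :
    (p / (2 * j ^ 2 * (p - 2 * j) * (p + 2 * j)) : ℚ) ∈ (Rat.padicValuation p).integer := by
  have hfactor : (p / (2 * j ^ 2 * (p - 2 * j) * (p + 2 * j)) : ℚ) =
      p * (((2 * j : ℕ) : ℚ)⁻¹ * (j : ℚ)⁻¹ * ((p - 2 * j : ℕ) : ℚ)⁻¹ *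
        ((p + 2 * j : ℕ) : ℚ)⁻¹) := by
    push_cast [hjp.le]
    field_simp
  rw [hfactor]
  refine mul_mem (natCast_mem _ p) (mul_mem (mul_mem (mul_mem ?_ ?_) ?_) ?_) <;>
    apply Rat.inv_natCast_mem_padicValuation_integer
  · exact Nat.not_dvd_of_pos_of_lt (by omega) hjp
  · exact Nat.not_dvd_of_pos_of_lt hj (by omega)
  · exact Nat.not_dvd_of_pos_of_lt (by omega) (by omega)
  · rw [Nat.dvd_add_right (dvd_refl p)]
    exact Nat.not_dvd_of_pos_of_lt (by omega) hjp

end PadicIntegral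

section AlternatingSum

variable {p k : ℕ}

theorem symmetric_terms_add_eq (hpk : p = 2 * k + 3) {j : ℕ} (hj : 1 ≤ j) (hjk : j ≤ k) :
    (p : ℚ) * (-1) ^ (2 + (k - j)) / (2 * ((2 + (k - j) : ℕ) : ℚ) - 1) +
        (p : ℚ) * (-1) ^ (2 + (k + j)) / (2 * ((2 + (k + j) : ℕ) : ℚ) - 1) =
      1 / 2 * ((-1) ^ (k + 1 + j) * (p : ℚ) ^ 2 / (j : ℚ) ^ 2) +
        (p : ℚ) ^ 3 * ((-1) ^ (k + j) * (p / (2 * j ^ 2 * (p - 2 * j) * (p + 2 * j)))) := by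
  have hsub : 2 * ((2 + (k - j) : ℕ) : ℚ) - 1 = p - 2 * j := by
    subst hpk; push_cast [hjk]; ring
  have hadd : 2 * ((2 + (k + j) : ℕ) : ℚ) - 1 = p + 2 * j := by
    subst hpk; push_cast; ring
  have hj0 : (j : ℚ) ≠ 0 := by positivity
  have hsub0 : (p : ℚ) - 2 * j ≠ 0 := by
    have : (j : ℚ) ≤ k := by exact_mod_cast hjk
    subst hpk; push_cast; linarith
  have hadd0 : (p : ℚ) + 2 * j ≠ 0 := by positivity
  rw [hsub, hadd, neg_one_pow_eq_of_mod_two_eq (b := k + j) (by omega),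
    neg_one_pow_eq_of_mod_two_eq (a := 2 + (k + j)) (b := k + j) (by omega),
    show k + 1 + j = k + j + 1 by ring, pow_succ]
  linear_combination (-1 : ℚ) ^ (k + j) * div_sub_add_div_add hj0 hsub0 hadd0

theorem sum_range_neg_one_pow_div_eq (hpk : p = 2 * k + 3) :
    ∑ i ∈ range p, (p : ℚ) * (-1) ^ i / (2 * (i : ℚ) - 1) =
      -2 * p + (-1) ^ (k + 2) +
        1 / 2 * ∑ j ∈ Icc 1 k, (-1) ^ (k + 1 + j) * (p : ℚ) ^ 2 / (j : ℚ) ^ 2 +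
        (p : ℚ) ^ 3 * ∑ j ∈ Icc 1 k,
          (-1) ^ (k + j) * ((p : ℚ) / (2 * j ^ 2 * (p - 2 * j) * (p + 2 * j))) := by
  have hcenter : (p : ℚ) * (-1) ^ (2 + k) / (2 * ((2 + k : ℕ) : ℚ) - 1) = (-1) ^ (k + 2) := by
    have hp0 : (p : ℚ) ≠ 0 := by rw [hpk]; positivity
    rw [show 2 * ((2 + k : ℕ) : ℚ) - 1 = p by subst hpk; push_cast; ring, add_comm 2 k]
    field_simp
  rw [show range p = range (2 + (2 * k + 1)) by rw [hpk]; ring_nf, sum_range_add,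
    sum_range_two_mul_add_one (fun x => (p : ℚ) * (-1) ^ (2 + x) / (2 * ((2 + x : ℕ) : ℚ) - 1)),
    hcenter,
    sum_congr rfl fun j hj => symmetric_terms_add_eq hpk (mem_Icc.mp hj).1 (mem_Icc.mp hj).2,
    sum_add_distrib, ← mul_sum, ← mul_sum, sum_range_succ, sum_range_one]
  push_cast
  ring

end AlternatingSum

theorem stmt_14 (p : ℕ) (hp : p.Prime) (hodd : Odd p) :
    ∃ a b : ℤ, b ≠ 0 ∧ ¬ (p : ℤ) ∣ b ∧
      ((∑ i ∈ Finset.range p, (p : ℚ) * (-1) ^ i / (2 * (i : ℚ) - 1)) -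
          (-2 * (p : ℚ) + (-1) ^ ((p + 1) / 2) +
            (1 / 2) * ∑ k ∈ Finset.Icc 1 ((p - 3) / 2),
              (-1) ^ ((p - 1) / 2 + k) * (p : ℚ) ^ 2 / (k : ℚ) ^ 2)) * (b : ℚ) =
        (p : ℚ) ^ 3 * (a : ℚ) := by
  have := Fact.mk hp
  obtain ⟨k, hk⟩ : ∃ k, p = 2 * k + 3 := by
    obtain ⟨m, rfl⟩ := hodd
    exact ⟨m - 1, by have := hp.two_le; omega⟩
  have hremainder : ∑ j ∈ Icc 1 k, (-1) ^ (k + j) *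
      ((p : ℚ) / (2 * j ^ 2 * (p - 2 * j) * (p + 2 * j))) ∈ (Rat.padicValuation p).integer :=
    sum_mem fun j hj => mul_mem (pow_mem (neg_mem (one_mem _)) _)
      (div_mem_padicValuation_integer p (mem_Icc.mp hj).1 (by have := (mem_Icc.mp hj).2; omega))
  obtain ⟨a, b, hb, hbp, hab⟩ := Rat.exists_mul_eq_of_mem_padicValuation_integer p hremainder
  refine ⟨a, b, hb, hbp, ?_⟩
  rw [show (p + 1) / 2 = k + 2 by omega, show (p - 1) / 2 = k + 1 by omega,
    show (p - 3) / 2 = k by omega, sum_range_neg_one_pow_div_eq hk]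
  linear_combination (p : ℚ) ^ 3 * hab
end

section
/- For nonnegative integers i, j, k, binom(k,i)*binom(k+i,i)*binom(k,j)*binom(k+j,j) = sum_{s=j}^{i+j} binom(i+j,i)*binom(j,s-i)*binom(s,j)*binom(k,s)*binom(k+s,s). -/
/-!
Write `T k s = C(k,s) C(k+s,s)` (the coefficients of the shifted Legendre polynomials), so the
claim reads `T k i * T k j = ∑ₛ c(i,j,s) T k s` with `c` independent of `k`. Both sides, as
functions of `k`, satisfy the first-order recurrence
`(k+1-i)(k+1-j) f (k+1) = (k+1+i)(k+1+j) f k`: the left side because each `T k i` satisfies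
`(k+1-i) T (k+1) i = (k+1+i) T k i`, the right side by creative telescoping in `s` (a
Wilf–Zeilberger certificate). Both sides vanish for `k < max i j` and agree at `k = max i j`,
where only `s = max i j` contributes; beyond that the leading coefficient of the recurrence is
nonzero.
-/

open Finset

theorem Nat.cast_choose_mul_succ_eq {R : Type*} [CommRing R] (n r : ℕ) :
    ((n + 1).choose r : R) * (n + 1 - r) = (n + 1) * n.choose r := by
  rcases le_or_gt r (n + 1) with h | h
  · have := congrArg (Nat.cast (R := R)) (Nat.choose_mul_succ_eq n r)
    push_cast [Nat.cast_sub h] at this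
    linear_combination -this
  · simp [Nat.choose_eq_zero_of_lt h, Nat.choose_eq_zero_of_lt (show n < r by omega)]

theorem Nat.cast_choose_succ_right_eq {R : Type*} [CommRing R] (n r : ℕ) :
    (n.choose (r + 1) : R) * (r + 1) = n.choose r * (n - r) := by
  rcases le_or_gt r n with h | h
  · have := congrArg (Nat.cast (R := R)) (Nat.choose_succ_right_eq n r)
    push_cast [Nat.cast_sub h] at this
    exact this
  · simp [Nat.choose_eq_zero_of_lt h, Nat.choose_eq_zero_of_lt (show n < r + 1 by omega)]

theorem eq_of_recurrence_of_ge {M : Type*} [MonoidWithZero M] [IsLeftCancelMulZero M]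
    {p q f g : ℕ → M} {m : ℕ} (hp : ∀ n ≥ m, p n ≠ 0)
    (hf : ∀ n, p n * f (n + 1) = q n * f n)
    (hg : ∀ n, p n * g (n + 1) = q n * g n) (hm : f m = g m) : ∀ n ≥ m, f n = g n := by
  intro n hn
  induction n, hn using Nat.le_induction with
  | base => exact hm
  | succ n hn ih => exact mul_left_cancel₀ (hp n hn) (by rw [hf, hg, ih])

namespace LegendreLinearization

def legendreCoeff (k s : ℕ) : ℕ := k.choose s * (k + s).choose s

def linCoeff (i j s : ℕ) : ℕ :=
  if i ≤ s then (i + j).choose i * j.choose (s - i) * s.choose j else 0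

theorem legendreCoeff_eq_zero_of_lt {k s : ℕ} (h : k < s) : legendreCoeff k s = 0 := by
  simp [legendreCoeff, Nat.choose_eq_zero_of_lt h]

theorem sub_mul_legendreCoeff_succ (k s : ℕ) :
    (k + 1 - s : ℤ) * legendreCoeff (k + 1) s = (k + 1 + s) * legendreCoeff k s := by
  have h1 := Nat.cast_choose_mul_succ_eq (R := ℤ) k s
  have h2 := Nat.cast_choose_mul_succ_eq (R := ℤ) (k + s) s
  have hu : (k + 1 : ℤ) ≠ 0 := by positivity
  refine mul_left_cancel₀ hu ?_
  simp only [legendreCoeff, show k + 1 + s = k + s + 1 by omega]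
  push_cast at h1 h2 ⊢
  linear_combination ((k + s + 1).choose s : ℤ) * (k + 1) * h1 + (k + 1) * (k.choose s : ℤ) * h2

/-- After multiplying by `k + 1` this is a polynomial combination of three ratio relations between
binomial coefficients, so no case split on `s ≤ k` is needed. -/
theorem legendreCoeff_recurrence (x y : ℤ) (k s : ℕ) :
    (k + 1 - x) * (k + 1 - y) * legendreCoeff (k + 1) s
        - (k + 1 + x) * (k + 1 + y) * legendreCoeff k s =
      2 * (s + 1) * (s - x - y) * k.choose s * (k + s + 1).choose (s + 1)
        + 2 * (s - x) * (s - y) * ((k + 1).choose s - k.choose s) * (k + s).choose s := by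
  have h1 := Nat.cast_choose_mul_succ_eq (R := ℤ) k s
  have h2 := Nat.cast_choose_mul_succ_eq (R := ℤ) (k + s) s
  have h3 := congrArg (Nat.cast (R := ℤ)) (Nat.add_one_mul_choose_eq (k + s) s)
  have hu : (k + 1 : ℤ) ≠ 0 := by positivity
  refine mul_left_cancel₀ hu ?_
  simp only [legendreCoeff, show k + 1 + s = k + s + 1 by omega]
  push_cast at h1 h2 h3 ⊢
  linear_combination
    (k + 1 - x) * (k + 1 - y) * ((k + 1).choose s : ℤ) * h2
    + 2 * (k + 1) * (s - x - y) * (k.choose s : ℤ) * h3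
    + ((k + s).choose s : ℤ) * (2 * (k + 1) * s + (k + 1) ^ 2 - (k + 1) * (x + y) - x * y) * h1

theorem linCoeff_eq_zero_of_lt {i j s : ℕ} (h : s < max i j) : linCoeff i j s = 0 := by
  unfold linCoeff
  split_ifs with hi
  · simp [Nat.choose_eq_zero_of_lt (show s < j by omega)]
  · rfl

theorem linCoeff_self_add_succ (i j : ℕ) : linCoeff i j (i + j + 1) = 0 := by
  simp [linCoeff, show i + j + 1 - i = j + 1 by omega]

theorem mul_linCoeff_succ (i j s : ℕ) :
    (s + 1 - i : ℤ) * (s + 1 - j) * linCoeff i j (s + 1) =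
      (s + 1) * (i + j - s) * linCoeff i j s := by
  rcases lt_or_ge s i with h | h
  · obtain rfl | h' := (Nat.succ_le_of_lt h).eq_or_lt
    · simp [linCoeff]
    · simp [linCoeff, show ¬ i ≤ s by omega, show ¬ i ≤ s + 1 by omega]
  · have h1 := Nat.cast_choose_succ_right_eq (R := ℤ) j (s - i)
    have h2 := Nat.cast_choose_mul_succ_eq (R := ℤ) s j
    simp only [linCoeff, if_pos h, if_pos (show i ≤ s + 1 by omega),
      show s + 1 - i = s - i + 1 by omega]
    push_cast [Nat.cast_sub h] at h1 h2 ⊢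
    linear_combination
      ((i + j).choose i : ℤ) * ((s + 1).choose j * (s + 1 - j)) * h1
      + ((i + j).choose i : ℤ) * (j.choose (s - i) * (j - (s - i))) * h2

/-- The factor `C(k+1,s) - C(k,s)` is `C(k,s-1)` for `s ≥ 1`, without truncated subtraction at
`s = 0`. -/
def wzCert (i j k s : ℕ) : ℤ :=
  2 * ((s : ℤ) - i) * (s - j) * linCoeff i j s * ((k + 1).choose s - k.choose s) *
    (k + s).choose s

theorem wzCert_zero (i j k : ℕ) : wzCert i j k 0 = 0 := by
  simp [wzCert]

theorem wzCert_self_add_succ (i j k : ℕ) : wzCert i j k (i + j + 1) = 0 := by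
  simp [wzCert, linCoeff_self_add_succ]

theorem linCoeff_mul_legendreCoeff_recurrence (i j k s : ℕ) :
    ((k : ℤ) + 1 - i) * (k + 1 - j) * (linCoeff i j s * legendreCoeff (k + 1) s)
        - (k + 1 + i) * (k + 1 + j) * (linCoeff i j s * legendreCoeff k s) =
      wzCert i j k s - wzCert i j k (s + 1) := by
  have hK := legendreCoeff_recurrence i j k s
  have hA := mul_linCoeff_succ i j s
  have hP : ((k + 1).choose (s + 1) : ℤ) - k.choose (s + 1) = k.choose s := by
    rw [Nat.choose_succ_succ']; push_cast; ring
  simp only [wzCert, show k + (s + 1) = k + s + 1 by omega]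
  push_cast at hK hA hP ⊢
  linear_combination (linCoeff i j s : ℤ) * hK
    + 2 * (k.choose s : ℤ) * (k + s + 1).choose (s + 1) * hA
    + 2 * ((s : ℤ) + 1 - i) * (s + 1 - j) * linCoeff i j (s + 1) * (k + s + 1).choose (s + 1) * hP

def linSum (i j k : ℕ) : ℕ := ∑ s ∈ range (i + j + 1), linCoeff i j s * legendreCoeff k s

theorem linSum_recurrence (i j k : ℕ) :
    ((k : ℤ) + 1 - i) * (k + 1 - j) * linSum i j (k + 1) =
      (k + 1 + i) * (k + 1 + j) * linSum i j k := by
  rw [← sub_eq_zero]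
  push_cast [linSum]
  rw [mul_sum, mul_sum, ← sum_sub_distrib]
  simp only [linCoeff_mul_legendreCoeff_recurrence]
  rw [sum_range_sub', wzCert_zero, wzCert_self_add_succ, sub_zero]

theorem legendreCoeff_mul_recurrence (i j k : ℕ) :
    ((k : ℤ) + 1 - i) * (k + 1 - j) * (legendreCoeff (k + 1) i * legendreCoeff (k + 1) j) =
      (k + 1 + i) * (k + 1 + j) * (legendreCoeff k i * legendreCoeff k j) := by
  have hi := sub_mul_legendreCoeff_succ k i
  have hj := sub_mul_legendreCoeff_succ k j
  linear_combination ((k : ℤ) + 1 - j) * legendreCoeff (k + 1) j * hi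
    + ((k : ℤ) + 1 + i) * legendreCoeff k i * hj

theorem legendreCoeff_mul_eq_linSum_max (i j : ℕ) :
    legendreCoeff (max i j) i * legendreCoeff (max i j) j = linSum i j (max i j) := by
  rw [linSum, sum_eq_single_of_mem (max i j) (mem_range.2 (by omega))]
  · rcases le_total i j with h | h
    · rw [max_eq_right h]
      simp only [legendreCoeff, linCoeff, if_pos h, Nat.choose_symm h, Nat.choose_self,
        add_comm j i]
      ring
    · rw [max_eq_left h]
      simp only [legendreCoeff, linCoeff, le_refl, if_true, Nat.sub_self, Nat.choose_zero_right,
        Nat.choose_self]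
      rw [Nat.choose_symm_add (a := i) (b := j)]
      ring
  · intro s _ hs
    rcases lt_or_gt_of_ne hs with hs | hs
    · rw [linCoeff_eq_zero_of_lt hs, zero_mul]
    · rw [legendreCoeff_eq_zero_of_lt hs, mul_zero]

theorem legendreCoeff_mul_eq_linSum (i j k : ℕ) :
    legendreCoeff k i * legendreCoeff k j = linSum i j k := by
  rcases lt_or_ge k (max i j) with hk | hk
  · have hL : legendreCoeff k i * legendreCoeff k j = 0 := by
      rcases lt_max_iff.1 hk with h | h <;> simp [legendreCoeff_eq_zero_of_lt h]
    rw [hL, linSum, eq_comm]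
    refine sum_eq_zero fun s _ ↦ ?_
    rcases lt_or_ge s (max i j) with hs | hs
    · rw [linCoeff_eq_zero_of_lt hs, zero_mul]
    · rw [legendreCoeff_eq_zero_of_lt (hk.trans_le hs), mul_zero]
  · have hp : ∀ n ≥ max i j, ((n : ℤ) + 1 - i) * (n + 1 - j) ≠ 0 := fun n hn ↦
      mul_ne_zero (by omega) (by omega)
    have := eq_of_recurrence_of_ge (f := fun n ↦ (legendreCoeff n i : ℤ) * legendreCoeff n j)
      (g := fun n ↦ (linSum i j n : ℤ)) hp (legendreCoeff_mul_recurrence i j)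
      (linSum_recurrence i j) (by exact_mod_cast legendreCoeff_mul_eq_linSum_max i j) k hk
    exact_mod_cast this

end LegendreLinearization

open LegendreLinearization

theorem stmt_17 (i j k : ℕ) :
    Nat.choose k i * Nat.choose (k + i) i * Nat.choose k j * Nat.choose (k + j) j =
      ∑ s ∈ Finset.Icc j (i + j),
        (if i ≤ s then
          Nat.choose (i + j) i * Nat.choose j (s - i) * Nat.choose s j *
            Nat.choose k s * Nat.choose (k + s) s
        else 0) := by
  have hIcc : Icc j (i + j) ⊆ range (i + j + 1) := fun s hs ↦ by
    simp only [mem_Icc, mem_range] at hs ⊢; omega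
  calc _ = legendreCoeff k i * legendreCoeff k j := by simp only [legendreCoeff]; ring
    _ = linSum i j k := legendreCoeff_mul_eq_linSum i j k
    _ = ∑ s ∈ Icc j (i + j), linCoeff i j s * legendreCoeff k s := by
      refine (sum_subset hIcc fun s hs hs' ↦ ?_).symm
      rw [linCoeff_eq_zero_of_lt (by simp only [mem_range, mem_Icc] at hs hs'; omega), zero_mul]
    _ = _ := sum_congr rfl fun s _ ↦ by
      simp only [linCoeff, legendreCoeff, ite_mul, zero_mul, mul_assoc]
end

section
/- For nonnegative integers s ≤ n, sum_{k=s}^{n-1} (2k+1)*binom(k,s)*binom(k+s,s) = n*binom(n+s,2s)*binom(2s,s)*(n-s)/(s+1). -/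
open Finset

/-! The summand `(2k+1) C(k,s) C(k+s,s)` is the forward difference of
`F k = k (k-s)/(s+1) · C(k,s) C(k+s,s)`, which follows from the two absorption identities
`(k+1-s) C(k+1,s) = (k+1) C(k,s)` and `(k+1) C(k+1+s,s) = (k+s+1) C(k+s,s)`.
The terms with `k < s` vanish, so the sum telescopes to `F n`, and trinomial revision
`C(n+s,2s) C(2s,s) = C(n+s,s) C(n,s)` turns `F n` into the right-hand side. -/

theorem Nat.choose_add_two_mul_mul_choose (n s : ℕ) :
    (n + s).choose (2 * s) * (2 * s).choose s = (n + s).choose s * n.choose s := by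
  rw [Nat.choose_mul (by omega), show n + s - s = n by omega, show 2 * s - s = s by omega]

theorem succ_sub_mul_choose_succ {R : Type*} [CommRing R] (k s : ℕ) :
    ((k : R) + 1 - s) * (k + 1).choose s = (k + 1) * k.choose s := by
  rcases le_or_gt s (k + 1) with hs | hs
  · have h := congrArg (Nat.cast : ℕ → R) (Nat.choose_mul_succ_eq k s)
    push_cast [hs] at h
    linear_combination -h
  · simp [Nat.choose_eq_zero_of_lt hs, Nat.choose_eq_zero_of_lt (show k < s by omega)]

theorem succ_mul_choose_add_succ {R : Type*} [CommRing R] (k s : ℕ) :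
    ((k : R) + 1) * (k + 1 + s).choose s = (k + s + 1) * (k + s).choose s := by
  have h := congrArg (Nat.cast : ℕ → R) (Nat.choose_mul_succ_eq (k + s) s)
  rw [show k + s + 1 - s = k + 1 by omega, show k + s + 1 = k + 1 + s by omega] at h
  push_cast at h
  linear_combination -h

def choosePrimitive (s k : ℕ) : ℚ :=
  k * (k - s) / (s + 1) * k.choose s * (k + s).choose s

theorem choosePrimitive_succ_sub (s k : ℕ) :
    choosePrimitive s (k + 1) - choosePrimitive s k =
      (2 * k + 1) * k.choose s * (k + s).choose s := by
  have h₁ := succ_sub_mul_choose_succ (R := ℚ) k s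
  have h₂ := succ_mul_choose_add_succ (R := ℚ) k s
  unfold choosePrimitive
  push_cast
  field_simp
  linear_combination
    ((k : ℚ) + 1) * ((k + 1 + s).choose s : ℚ) * h₁ + ((k : ℚ) + 1) * (k.choose s : ℚ) * h₂

theorem stmt_18_general (s n : ℕ) :
    ∑ k ∈ Finset.Ico s n,
        (2 * (k : ℚ) + 1) * (Nat.choose k s : ℚ) * (Nat.choose (k + s) s : ℚ) =
      (n : ℚ) * (Nat.choose (n + s) (2 * s) : ℚ) * (Nat.choose (2 * s) s : ℚ) *
        ((n : ℚ) - (s : ℚ)) / ((s : ℚ) + 1) := by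
  calc ∑ k ∈ Ico s n, (2 * (k : ℚ) + 1) * (k.choose s : ℚ) * ((k + s).choose s : ℚ)
      = ∑ k ∈ range n, (2 * (k : ℚ) + 1) * (k.choose s : ℚ) * ((k + s).choose s : ℚ) := by
        refine sum_subset (fun k hk => by simp at hk ⊢; omega) fun k hk hks => ?_
        simp only [mem_range, mem_Ico, not_and, not_lt] at hk hks
        simp [Nat.choose_eq_zero_of_lt (show k < s by omega)]
    _ = ∑ k ∈ range n, (choosePrimitive s (k + 1) - choosePrimitive s k) := by
        simp only [choosePrimitive_succ_sub]
    _ = choosePrimitive s n := by rw [sum_range_sub]; simp [choosePrimitive]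
    _ = _ := by
        have h := congrArg (Nat.cast : ℕ → ℚ) (Nat.choose_add_two_mul_mul_choose n s)
        push_cast at h
        unfold choosePrimitive
        rw [mul_assoc (n : ℚ), h]
        ring

theorem stmt_18 (s n : ℕ) (h : s ≤ n) :
    ∑ k ∈ Finset.Ico s n,
        (2 * (k : ℚ) + 1) * (Nat.choose k s : ℚ) * (Nat.choose (k + s) s : ℚ) =
      (n : ℚ) * (Nat.choose (n + s) (2 * s) : ℚ) * (Nat.choose (2 * s) s : ℚ) *
        ((n : ℚ) - (s : ℚ)) / ((s : ℚ) + 1) :=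
  stmt_18_general s n
end

section
/- For nonnegative integers i ≤ m, sum_{s=i}^{m} (-1)^s/(s+1) * binom(s,i)*binom(i,m-s) = (-1)^m / ((m+1)*binom(m,i)). -/
/-!
Write the sum as a convolution over `s + k = m` (terms with `s < i` vanish). Without the weight
`1 / (s + 1)` the convolution `∑ (-1)^s C(s,i) C(i,k)` equals `(-1)^m`: up to sign it is the `i`-th
forward difference of `x ↦ C(x,i)` at `m - i`. With the weight, splitting `m + 2 = (s + 1) + k` and
using `(k + 1) C(i,k+1) = (i - k) C(i,k)` gives the recursion `(m + 2) T (m + 1) = (i - m - 1) T m`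
for the weighted convolution `T m`, which the closed form satisfies because
`(m + 1) C(m,i) = (m + 1 - i) C(m + 1,i)`.
-/

open Finset

section CommRing

variable {R : Type*} [CommRing R]

theorem Nat.cast_choose_succ_right_mul (n k : ℕ) :
    (n.choose (k + 1) : R) * (k + 1) = n.choose k * (n - k) := by
  rcases le_or_gt k n with hk | hk
  · have := congrArg (Nat.cast : ℕ → R) (Nat.choose_succ_right_eq n k)
    push_cast [Nat.cast_sub hk] at this
    exact this
  · simp [Nat.choose_eq_zero_of_lt hk, Nat.choose_eq_zero_of_lt (hk.trans (Nat.lt_succ_self k))]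

theorem sum_range_neg_one_pow_mul_choose_mul_choose_sub {i m : ℕ} (h : i ≤ m) :
    ∑ k ∈ range (i + 1), (-1 : ℤ) ^ k * i.choose k * (m - k).choose i = 1 := by
  have hΔ := congrFun (fwdDiff_iter_choose 0 i) (m - i)
  rw [add_zero, fwdDiff_iter_eq_sum_shift, ← sum_range_reflect, Nat.choose_zero_right,
    Nat.cast_one] at hΔ
  refine (sum_congr rfl fun k hk => ?_).trans hΔ
  have hki : k ≤ i := Nat.lt_succ_iff.1 (mem_range.1 hk)
  rw [Nat.add_sub_cancel, Nat.sub_sub_self hki, Nat.choose_symm hki, smul_eq_mul, smul_eq_mul,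
    mul_one, show m - i + (i - k) = m - k by omega]

theorem sum_antidiagonal_neg_one_pow_mul_choose_mul_choose {i m : ℕ} (h : i ≤ m) :
    ∑ p ∈ antidiagonal m, (-1 : R) ^ p.1 * p.1.choose i * i.choose p.2 = (-1) ^ m := by
  have hsign {k : ℕ} (hk : k ≤ m) : (-1 : R) ^ (m - k) = (-1) ^ m * (-1) ^ k := by
    obtain ⟨d, rfl⟩ := Nat.exists_eq_add_of_le hk
    rw [Nat.add_sub_cancel_left, pow_add, mul_right_comm, ← pow_add, ← two_mul, pow_mul]
    simp
  rw [← Nat.sum_antidiagonal_swap, Nat.sum_antidiagonal_eq_sum_range_succ_mk,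
    ← sum_subset (range_subset_range.2 (Nat.succ_le_succ h))]
  · calc _ = ∑ k ∈ range (i + 1),
          (-1 : R) ^ m * (((-1 : ℤ) ^ k * i.choose k * (m - k).choose i : ℤ) : R) :=
          sum_congr rfl fun k hk => by
            rw [Prod.swap, hsign (by have := mem_range.1 hk; omega)]
            push_cast
            ring
      _ = (-1) ^ m := by
          rw [← mul_sum, ← Int.cast_sum, sum_range_neg_one_pow_mul_choose_mul_choose_sub h,
            Int.cast_one, mul_one]
  · intro k _ hk
    simp [Nat.choose_eq_zero_of_lt (by simpa using hk : i < k)]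

end CommRing

section Field

variable (K : Type*) [Field K]

def chooseConvolution (i m : ℕ) : K :=
  ∑ p ∈ antidiagonal m, (-1) ^ p.1 / (p.1 + 1) * p.1.choose i * i.choose p.2

variable {K} [CharZero K]

theorem chooseConvolution_succ {i m : ℕ} (h : i ≤ m) :
    (m + 2) * chooseConvolution K i (m + 1) = (i - m - 1) * chooseConvolution K i m := by
  have hsplit : ∀ p ∈ antidiagonal (m + 1),
      (m + 2 : K) * ((-1) ^ p.1 / (p.1 + 1) * p.1.choose i * i.choose p.2) =
        (-1) ^ p.1 * p.1.choose i * i.choose p.2 +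
          (-1) ^ p.1 / (p.1 + 1) * p.1.choose i * (i.choose p.2 * p.2) := by
    intro p hp
    have hp' : (p.1 + p.2 : K) = m + 1 := by exact_mod_cast mem_antidiagonal.1 hp
    rw [show (m + 2 : K) = (p.1 + 1) + p.2 by linear_combination -hp']
    field_simp
  have hshift : ∀ p ∈ antidiagonal m,
      (-1) ^ p.1 / (p.1 + 1) * p.1.choose i * (i.choose (p.2 + 1) * ((p.2 + 1 : ℕ) : K)) =
        (i - m - 1) * ((-1) ^ p.1 / (p.1 + 1) * p.1.choose i * i.choose p.2) +
          (-1) ^ p.1 * p.1.choose i * i.choose p.2 := by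
    intro p hp
    have hp' : (p.1 + p.2 : K) = m := by exact_mod_cast mem_antidiagonal.1 hp
    rw [Nat.cast_succ, Nat.cast_choose_succ_right_mul, ← hp']
    field_simp
    ring
  rw [chooseConvolution, mul_sum, sum_congr rfl hsplit, sum_add_distrib,
    sum_antidiagonal_neg_one_pow_mul_choose_mul_choose (h.trans m.le_succ),
    Nat.sum_antidiagonal_succ', sum_congr rfl hshift, sum_add_distrib, ← mul_sum,
    sum_antidiagonal_neg_one_pow_mul_choose_mul_choose h, chooseConvolution]
  simp only [Nat.cast_zero, mul_zero, zero_add, pow_succ]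
  ring

theorem chooseConvolution_eq {i m : ℕ} (h : i ≤ m) :
    chooseConvolution K i m = (-1) ^ m / ((m + 1) * m.choose i) := by
  induction m, h using Nat.le_induction with
  | base =>
    rw [chooseConvolution, sum_eq_single_of_mem (i, 0) (by simp)]
    · simp
    · intro p hp hne
      have hlt : p.1 < i := by
        have := mem_antidiagonal.1 hp
        have : p.2 ≠ 0 := fun h2 => hne (Prod.ext (by omega) h2)
        omega
      simp [Nat.choose_eq_zero_of_lt hlt]
  | succ m h ih =>
    have hrec := chooseConvolution_succ (K := K) h
    have hpascal : (m.choose i : K) * (m + 1) = (m + 1).choose i * (m + 1 - i) := by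
      have := congrArg (Nat.cast : ℕ → K) (Nat.choose_mul_succ_eq m i)
      push_cast [Nat.cast_sub (h.trans m.le_succ)] at this
      exact this
    have hc : (m.choose i : K) ≠ 0 := Nat.cast_ne_zero.2 (Nat.choose_pos h).ne'
    have hc' : ((m + 1).choose i : K) ≠ 0 :=
      Nat.cast_ne_zero.2 (Nat.choose_pos (h.trans m.le_succ)).ne'
    have hm1 : (m + 1 : K) ≠ 0 := by exact_mod_cast m.succ_ne_zero
    have hm2 : (m + 2 : K) ≠ 0 := by exact_mod_cast (m + 1).succ_ne_zero
    rw [ih, mul_comm] at hrec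
    rw [eq_div_of_mul_eq hm2 hrec, Nat.cast_succ, add_assoc, one_add_one_eq_two, pow_succ]
    field_simp
    linear_combination hpascal

end Field

theorem stmt_19 (i m : ℕ) (h : i ≤ m) :
    ∑ s ∈ Finset.Icc i m,
        (-1 : ℚ) ^ s / ((s : ℚ) + 1) * (Nat.choose s i : ℚ) * (Nat.choose i (m - s) : ℚ) =
      (-1 : ℚ) ^ m / (((m : ℚ) + 1) * (Nat.choose m i : ℚ)) := by
  have hsub : Icc i m ⊆ range (m + 1) := fun s hs => mem_range.2 (by grind)
  rw [sum_subset hsub fun s hs hs' => ?_,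
    ← Nat.sum_antidiagonal_eq_sum_range_succ fun s k =>
      (-1 : ℚ) ^ s / (s + 1) * s.choose i * i.choose k]
  · exact chooseConvolution_eq h
  · have hlt : s < i := by grind
    simp [Nat.choose_eq_zero_of_lt hlt]
end
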